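/- arXiv:2005.03105 — 2 statements merged into one kernel-verified Lean document; each statement's English description precedes it below -/
import Mathlib

section
/- Let n ≥ 3 and let C_1, …, C_{n−1} ∈ GL_r(ℂ) be an irreducible representation of B_n of dimension r ≥ n+1, and set T = C_1 C_2 ⋯ C_{n−1}. Suppose v ∈ ℂ^r is a nonzero vector such that C_i v ∈ span{v} for every i ∈ {1, …, n−3} ∪ {n−1}. Then the n−2 vectors v, Tv, T²v, …, T^{n−3}v are linearly independent. -/
/-!
Suppose the vectors `T^k v`, `k < n - 2`, are dependent, and let `m ≤ n - 3` be the first index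
with `T^m v` in the span of the earlier ones. Then the cyclic subspace `Z` of `T` at `v` has
dimension at most `m`, and since `T` is invertible, `Z` is spanned by any `m` consecutive vectors
`T^a v, …, T^(a+m-1) v`. The braid relations give `C (i + e) * T^e = T^e * C i`, so for `j ≥ m`
the window starting at `a = j - m` consists of eigenvectors of `C j` (because `C (m - k) v ∈ ℂ v`),
and `Z` is `C j`-invariant. Every `C j` with `j < m` is conjugate to `C (n - 1)` by a power of
`T`, so `Z` is invariant under the whole representation, contradicting irreducibility as
`0 < dim Z < r`.
-/

section Braid

variable {M : Type*} [Monoid M]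

structure SatisfiesBraidRelations (C : ℕ → M) (n : ℕ) : Prop where
  comm : ∀ i j, 1 ≤ i → i ≤ n - 1 → 1 ≤ j → j ≤ n - 1 → i + 2 ≤ j → C i * C j = C j * C i
  braid : ∀ i, 1 ≤ i → i ≤ n - 2 → C i * C (i + 1) * C i = C (i + 1) * C i * C (i + 1)

theorem SatisfiesBraidRelations.map {N F : Type*} [Monoid N] [FunLike F M N]
    [MonoidHomClass F M N] {C : ℕ → M} {n : ℕ} (h : SatisfiesBraidRelations C n) (φ : F) :
    SatisfiesBraidRelations (φ ∘ C) n where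
  comm i j hi hin hj hjn hij := by
    simp only [Function.comp_apply, ← map_mul, h.comm i j hi hin hj hjn hij]
  braid i hi hin := by simp only [Function.comp_apply, ← map_mul, h.braid i hi hin]

def coxeterElement (C : ℕ → M) (n : ℕ) : M :=
  (List.map (fun i => C (i + 1)) (List.range (n - 1))).prod

theorem List.prod_map_range_add_two_add (f : ℕ → M) (p q : ℕ) :
    ((List.range (p + 2 + q)).map f).prod =
      ((List.range p).map f).prod * f p * f (p + 1) *
        ((List.range q).map fun t => f (p + 2 + t)).prod := by
  simp [List.range_add, List.range_succ, mul_assoc, Function.comp_def]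

theorem isUnit_coxeterElement {C : ℕ → M} {n : ℕ}
    (hC : ∀ i, 1 ≤ i → i ≤ n - 1 → IsUnit (C i)) : IsUnit (coxeterElement C n) :=
  List.prod_isUnit fun x hx => by
    obtain ⟨i, hi, rfl⟩ := List.mem_map.mp hx
    exact hC (i + 1) (by omega) (by have := List.mem_range.mp hi; omega)

theorem SatisfiesBraidRelations.mul_coxeterElement {C : ℕ → M} {n : ℕ}
    (h : SatisfiesBraidRelations C n) {i : ℕ} (hi : 1 ≤ i) (hin : i ≤ n - 2) :
    C (i + 1) * coxeterElement C n = coxeterElement C n * C i := by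
  obtain ⟨p, rfl⟩ : ∃ p, i = p + 1 := ⟨i - 1, by omega⟩
  obtain ⟨q, hq⟩ : ∃ q, n - 1 = p + 2 + q := ⟨n - 1 - (p + 2), by omega⟩
  set A := ((List.range p).map fun t => C (t + 1)).prod
  set B := ((List.range q).map fun t => C (p + 2 + t + 1)).prod
  have hsplit : coxeterElement C n = A * C (p + 1) * C (p + 2) * B := by
    rw [coxeterElement, hq, List.prod_map_range_add_two_add]
  have hA : Commute (C (p + 2)) A := Commute.list_prod_right _ _ fun x hx => by
    obtain ⟨t, ht, rfl⟩ := List.mem_map.mp hx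
    have ht := List.mem_range.mp ht
    exact (h.comm _ _ (by omega) (by omega) (by omega) (by omega) (by omega)).symm
  have hB : Commute (C (p + 1)) B := Commute.list_prod_right _ _ fun x hx => by
    obtain ⟨t, ht, rfl⟩ := List.mem_map.mp hx
    have ht := List.mem_range.mp ht
    exact h.comm _ _ (by omega) (by omega) (by omega) (by omega) (by omega)
  calc C (p + 2) * coxeterElement C n
      = A * (C (p + 2) * C (p + 1) * C (p + 2)) * B := by
        simp only [hsplit, mul_assoc, hA.left_comm]
    _ = A * (C (p + 1) * C (p + 2) * C (p + 1)) * B := by rw [h.braid (p + 1) hi hin]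
    _ = coxeterElement C n * C (p + 1) := by simp only [hsplit, mul_assoc, hB.eq]

theorem SatisfiesBraidRelations.mul_coxeterElement_pow {C : ℕ → M} {n : ℕ}
    (h : SatisfiesBraidRelations C n) (e : ℕ) {i : ℕ} (hi : 1 ≤ i) (hin : i + e ≤ n - 1) :
    C (i + e) * coxeterElement C n ^ e = coxeterElement C n ^ e * C i := by
  induction e generalizing i with
  | zero => simp
  | succ e ih =>
    rw [pow_succ, ← mul_assoc, show i + (e + 1) = i + 1 + e by omega, ih (by omega) (by omega),
      mul_assoc, h.mul_coxeterElement hi (by omega), ← mul_assoc, ← pow_succ]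

end Braid

section Cyclic

variable {K V : Type*} [Field K] [AddCommGroup V] [Module K V]

theorem exists_mem_span_of_not_linearIndependent {w : ℕ → V} {k : ℕ}
    (h : ¬LinearIndependent K fun i : Fin k => w i) :
    ∃ m < k, w m ∈ Submodule.span K (Set.range fun i : Fin m => w i) := by
  induction k with
  | zero => exact absurd linearIndependent_empty_type h
  | succ k ih =>
    have hsnoc : (fun i : Fin (k + 1) => w i) = Fin.snoc (fun i : Fin k => w i) (w k) := by
      ext i
      induction i using Fin.lastCases <;> simp
    rw [hsnoc, linearIndependent_finSnoc, not_and_or, not_not] at h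
    rcases h with h | h
    · obtain ⟨m, hm, hw⟩ := ih h
      exact ⟨m, by omega, hw⟩
    · exact ⟨k, by omega, h⟩

theorem Submodule.mem_of_apply_mem_of_injective [FiniteDimensional K V] {g : Module.End K V}
    (hg : Function.Injective g) {p : Submodule K V} (hp : ∀ x ∈ p, g x ∈ p) {x : V}
    (hx : g x ∈ p) : x ∈ p := by
  have hsurj : Function.Surjective (g.restrict hp) :=
    LinearMap.injective_iff_surjective.mp fun y z hyz => Subtype.ext (hg (congrArg Subtype.val hyz))
  obtain ⟨y, hy⟩ := hsurj ⟨g x, hx⟩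
  have : g y = g x := congrArg Subtype.val hy
  exact hg this ▸ y.2

namespace Module.End

def cyclicSpan (f : Module.End K V) (v : V) : Submodule K V :=
  Submodule.span K (Set.range fun i : ℕ => (f ^ i) v)

variable {f : Module.End K V} {v : V}

theorem pow_apply_mem_cyclicSpan (i : ℕ) : (f ^ i) v ∈ cyclicSpan f v :=
  Submodule.subset_span ⟨i, rfl⟩

theorem pow_apply_mem_cyclicSpan_of_mem (d : ℕ) {x : V} (hx : x ∈ cyclicSpan f v) :
    (f ^ d) x ∈ cyclicSpan f v := by
  have hmap : (cyclicSpan f v).map (f ^ d) ≤ cyclicSpan f v := by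
    rw [cyclicSpan, Submodule.map_span, Submodule.span_le]
    rintro _ ⟨_, ⟨i, rfl⟩, rfl⟩
    rw [← mul_apply, ← pow_add]
    exact pow_apply_mem_cyclicSpan _
  exact hmap (Submodule.mem_map_of_mem hx)

theorem pow_apply_mem_span_shift {m : ℕ}
    (hm : (f ^ m) v ∈ Submodule.span K (Set.range fun i : Fin m => (f ^ (i : ℕ)) v))
    {a j : ℕ} (hj : a ≤ j) :
    (f ^ j) v ∈ Submodule.span K (Set.range fun i : Fin m => (f ^ (a + i)) v) := by
  induction j using Nat.strong_induction_on with
  | _ j ih =>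
  by_cases hjm : j < a + m
  · exact Submodule.subset_span ⟨⟨j - a, by omega⟩, by simp only [Nat.add_sub_cancel' hj]⟩
  · have hj' : (f ^ j) v ∈ (Submodule.span K (Set.range fun i : Fin m => (f ^ (i : ℕ)) v)).map
        (f ^ (j - m)) := by
      have := Submodule.mem_map_of_mem (f := f ^ (j - m)) hm
      rwa [← mul_apply, ← pow_add, Nat.sub_add_cancel (by omega)] at this
    rw [Submodule.map_span, ← Set.range_comp] at hj'
    refine Submodule.span_le.mpr ?_ hj'
    rintro _ ⟨i, rfl⟩
    simp only [Function.comp_apply, ← mul_apply, ← pow_add]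
    exact ih _ (by omega) (by omega)

variable [FiniteDimensional K V]

theorem span_shift_eq_cyclicSpan (hf : Function.Injective f) {m : ℕ}
    (hm : (f ^ m) v ∈ Submodule.span K (Set.range fun i : Fin m => (f ^ (i : ℕ)) v)) (a : ℕ) :
    Submodule.span K (Set.range fun i : Fin m => (f ^ (a + i)) v) = cyclicSpan f v := by
  have hle : Submodule.span K (Set.range fun i : Fin m => (f ^ (a + i)) v) ≤ cyclicSpan f v :=
    Submodule.span_le.mpr (by rintro _ ⟨i, rfl⟩; exact pow_apply_mem_cyclicSpan _)
  have hmap : (cyclicSpan f v).map (f ^ a) ≤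
      Submodule.span K (Set.range fun i : Fin m => (f ^ (a + i)) v) := by
    rw [cyclicSpan, Submodule.map_span, Submodule.span_le]
    rintro _ ⟨_, ⟨i, rfl⟩, rfl⟩
    rw [← mul_apply, ← pow_add]
    exact pow_apply_mem_span_shift hm (Nat.le_add_right a i)
  have hfa : Function.Injective (f ^ a) := by
    rw [coe_pow]
    exact hf.iterate a
  refine Submodule.eq_of_le_of_finrank_le hle ?_
  calc Module.finrank K (cyclicSpan f v)
      = Module.finrank K ((cyclicSpan f v).map (f ^ a)) :=
        (Submodule.equivMapOfInjective _ hfa _).finrank_eq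
    _ ≤ _ := Submodule.finrank_mono hmap

theorem finrank_cyclicSpan_le (hf : Function.Injective f) {m : ℕ}
    (hm : (f ^ m) v ∈ Submodule.span K (Set.range fun i : Fin m => (f ^ (i : ℕ)) v)) :
    Module.finrank K (cyclicSpan f v) ≤ m := by
  rw [← span_shift_eq_cyclicSpan hf hm 0]
  exact (finrank_range_le_card _).trans_eq (Fintype.card_fin m)

end Module.End

end Cyclic

section BraidRepresentation

open Module.End

variable {K V : Type*} [Field K] [AddCommGroup V] [Module K V] [FiniteDimensional K V]
  {C : ℕ → Module.End K V} {n m : ℕ} {v : V}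

theorem SatisfiesBraidRelations.apply_mem_cyclicSpan_of_le (h : SatisfiesBraidRelations C n)
    (hT : Function.Injective ⇑(coxeterElement C n))
    (hline : ∀ i, 1 ≤ i → i ≤ n - 3 → C i v ∈ Submodule.span K {v})
    (hm : (coxeterElement C n ^ m) v ∈
      Submodule.span K (Set.range fun i : Fin m => (coxeterElement C n ^ (i : ℕ)) v))
    (hmn : m ≤ n - 3) {j : ℕ} (hmj : m ≤ j) (hjn : j ≤ n - 1) {x : V}
    (hx : x ∈ cyclicSpan (coxeterElement C n) v) :
    C j x ∈ cyclicSpan (coxeterElement C n) v := by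
  set T := coxeterElement C n
  rw [← span_shift_eq_cyclicSpan hT hm (j - m)] at hx
  have hmap : (Submodule.span K (Set.range fun i : Fin m => (T ^ (j - m + i)) v)).map (C j) ≤
      cyclicSpan T v := by
    rw [Submodule.map_span, Submodule.span_le]
    rintro _ ⟨_, ⟨i, rfl⟩, rfl⟩
    have hconj := h.mul_coxeterElement_pow (j - m + i) (i := m - i) (by omega) (by omega)
    rw [show m - i + (j - m + i) = j by omega] at hconj
    obtain ⟨c, hc⟩ := Submodule.mem_span_singleton.mp (hline (m - i) (by omega) (by omega))
    rw [SetLike.mem_coe, ← mul_apply, hconj, mul_apply, ← hc, map_smul]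
    exact Submodule.smul_mem _ _ (pow_apply_mem_cyclicSpan _)
  exact hmap (Submodule.mem_map_of_mem hx)

theorem SatisfiesBraidRelations.apply_mem_cyclicSpan (h : SatisfiesBraidRelations C n)
    (hT : Function.Injective ⇑(coxeterElement C n))
    (hline : ∀ i, (1 ≤ i ∧ i ≤ n - 3) ∨ i = n - 1 → C i v ∈ Submodule.span K {v})
    (hm : (coxeterElement C n ^ m) v ∈
      Submodule.span K (Set.range fun i : Fin m => (coxeterElement C n ^ (i : ℕ)) v))
    (hmn : m ≤ n - 3) {j : ℕ} (hj : 1 ≤ j) (hjn : j ≤ n - 1) {x : V}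
    (hx : x ∈ cyclicSpan (coxeterElement C n) v) :
    C j x ∈ cyclicSpan (coxeterElement C n) v := by
  have hline' : ∀ i, 1 ≤ i → i ≤ n - 3 → C i v ∈ Submodule.span K {v} :=
    fun i hi hin => hline i (Or.inl ⟨hi, hin⟩)
  rcases le_or_gt m j with hmj | hjm
  · exact h.apply_mem_cyclicSpan_of_le hT hline' hm hmn hmj hjn hx
  set T := coxeterElement C n
  set d := n - 1 - j
  have hTd : Function.Injective (T ^ d) := by
    rw [coe_pow]
    exact hT.iterate d
  refine Submodule.mem_of_apply_mem_of_injective hTd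
    (fun y hy => pow_apply_mem_cyclicSpan_of_mem d hy) ?_
  have hconj := h.mul_coxeterElement_pow d hj (by omega)
  rw [show j + d = n - 1 by omega] at hconj
  rw [← mul_apply, ← hconj, mul_apply]
  exact h.apply_mem_cyclicSpan_of_le hT hline' hm hmn (by omega) le_rfl
    (pow_apply_mem_cyclicSpan_of_mem d hx)

theorem SatisfiesBraidRelations.linearIndependent_coxeterElement_pow_apply
    (h : SatisfiesBraidRelations C n) (hdim : n - 2 ≤ Module.finrank K V)
    (hT : IsUnit (coxeterElement C n))
    (hirr : ∀ p : Submodule K V, (∀ i, 1 ≤ i → i ≤ n - 1 → ∀ x ∈ p, C i x ∈ p) → p = ⊥ ∨ p = ⊤)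
    (hv : v ≠ 0) (hline : ∀ i, (1 ≤ i ∧ i ≤ n - 3) ∨ i = n - 1 → C i v ∈ Submodule.span K {v}) :
    LinearIndependent K fun i : Fin (n - 2) => (coxeterElement C n ^ (i : ℕ)) v := by
  set T := coxeterElement C n
  by_contra hdep
  obtain ⟨m, hmn, hm⟩ := exists_mem_span_of_not_linearIndependent (w := fun i => (T ^ i) v) hdep
  have hTinj : Function.Injective T := ((isUnit_iff T).mp hT).injective
  rcases hirr (cyclicSpan T v) (fun j hj hjn x hx =>
    h.apply_mem_cyclicSpan hTinj hline hm (by omega) hj hjn hx) with hbot | htop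
  · exact hv (by simpa [hbot] using pow_apply_mem_cyclicSpan (f := T) (v := v) 0)
  · have hrank := finrank_cyclicSpan_le hTinj hm
    rw [htop, finrank_top] at hrank
    omega

end BraidRepresentation

theorem stmt_9_general (n r : ℕ) (hr : n + 1 ≤ r)
    (C : ℕ → Matrix (Fin r) (Fin r) ℂ)
    (hinv : ∀ i, 1 ≤ i → i ≤ n - 1 → IsUnit (C i))
    (hcomm : ∀ i j, 1 ≤ i → i ≤ n - 1 → 1 ≤ j → j ≤ n - 1 → i + 2 ≤ j →
      C i * C j = C j * C i)
    (hbraid : ∀ i, 1 ≤ i → i ≤ n - 2 →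
      C i * C (i + 1) * C i = C (i + 1) * C i * C (i + 1))
    (hirr : ∀ p : Submodule ℂ (Fin r → ℂ),
      (∀ i, 1 ≤ i → i ≤ n - 1 → ∀ v ∈ p, (C i).mulVec v ∈ p) → p = ⊥ ∨ p = ⊤)
    (T : Matrix (Fin r) (Fin r) ℂ)
    (hT : T = (List.map (fun i => C (i + 1)) (List.range (n - 1))).prod)
    (v : Fin r → ℂ) (hv : v ≠ 0)
    (hline : ∀ i, (1 ≤ i ∧ i ≤ n - 3) ∨ i = n - 1 →
      (C i).mulVec v ∈ Submodule.span ℂ {v}) :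
    LinearIndependent ℂ (fun i : Fin (n - 2) => (T ^ (i : ℕ)).mulVec v) := by
  replace hT : T = coxeterElement C n := hT
  subst hT
  let Φ := (Matrix.toLinAlgEquiv' : Matrix (Fin r) (Fin r) ℂ ≃ₐ[ℂ] Module.End ℂ (Fin r → ℂ))
  have hΦT : Φ (coxeterElement C n) = coxeterElement (Φ ∘ C) n := by
    rw [coxeterElement, map_list_prod, List.map_map]
    rfl
  have hlin := SatisfiesBraidRelations.linearIndependent_coxeterElement_pow_apply
    ((SatisfiesBraidRelations.mk hcomm hbraid).map Φ)
    (by rw [Module.finrank_fin_fun]; omega) (hΦT ▸ (isUnit_coxeterElement hinv).map Φ)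
    (fun p hp => hirr p fun i hi hin x hx => by simpa [Φ] using hp i hi hin x hx) hv
    (fun i hi => by simpa [Φ] using hline i hi)
  have hpow (k : ℕ) : (coxeterElement C n ^ k).mulVec v = (coxeterElement (Φ ∘ C) n ^ k) v := by
    rw [← hΦT, ← map_pow, Matrix.toLinAlgEquiv'_apply]
  simpa only [hpow] using hlin

/-- For `n ≥ 3` and an irreducible representation of `B_n` of dimension `r ≥ n+1`,
with `T = C 1 * C 2 * ⋯ * C (n-1)`: if the line spanned by a nonzero vector `v` is
invariant under `C 1, …, C (n-3)` and `C (n-1)`, then the `n-2` vectors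
`v, Tv, T²v, …, T^{n-3} v` are linearly independent. -/
theorem stmt_9 (n r : ℕ) (hn : 3 ≤ n) (hr : n + 1 ≤ r)
    (C : ℕ → Matrix (Fin r) (Fin r) ℂ)
    (hinv : ∀ i, 1 ≤ i → i ≤ n - 1 → IsUnit (C i))
    (hcomm : ∀ i j, 1 ≤ i → i ≤ n - 1 → 1 ≤ j → j ≤ n - 1 → i + 2 ≤ j →
      C i * C j = C j * C i)
    (hbraid : ∀ i, 1 ≤ i → i ≤ n - 2 →
      C i * C (i + 1) * C i = C (i + 1) * C i * C (i + 1))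
    (hirr : ∀ p : Submodule ℂ (Fin r → ℂ),
      (∀ i, 1 ≤ i → i ≤ n - 1 → ∀ v ∈ p, (C i).mulVec v ∈ p) → p = ⊥ ∨ p = ⊤)
    (T : Matrix (Fin r) (Fin r) ℂ)
    (hT : T = (List.map (fun i => C (i + 1)) (List.range (n - 1))).prod)
    (v : Fin r → ℂ) (hv : v ≠ 0)
    (hline : ∀ i, (1 ≤ i ∧ i ≤ n - 3) ∨ i = n - 1 →
      (C i).mulVec v ∈ Submodule.span ℂ {v}) :
    LinearIndependent ℂ (fun i : Fin (n - 2) => (T ^ (i : ℕ)).mulVec v) :=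
  stmt_9_general n r hr C hinv hcomm hbraid hirr T hT v hv hline
end

section
/- Let n ≥ 6 and let C_1, …, C_{n−1} ∈ GL_r(ℂ) be an irreducible representation of B_n of dimension r ≥ n+1; set A_i = C_i − I, T = C_1 ⋯ C_{n−1}, A_0 = T C_{n−1} T^{−1} − I, indices in ℤ_n. Suppose rank(A_i) = 3 for all i ∈ ℤ_n and Im A_i ∩ Im A_{i+1} ≠ {0} for all i ∈ ℤ_n (indices modulo n). Then dim(Im A_i ∩ Im A_{i+1}) = 1 for all i ∈ ℤ_n. -/
/-!
Conjugation by `T` shifts `A i` to `A (i + 1)` (at `i = 0` this is the full-twist relation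
`T² C (n - 1) = C 1 T²`), and `A i`, `A j` commute unless `i` and `j` are cyclically adjacent.
So `T` carries `W i = Im A i ∩ Im A (i + 1)` onto `W (i + 1)`, and `d = dim W i` is constant,
with `1 ≤ d ≤ 3`.
A shift-equivariant family of subspaces whose member `j + 2` is built from `Im A (j + 2)`,
`Im A (j + 3)`, `Im A (j + 4)` is `A j`-invariant for every `j`; by irreducibility it cannot be
constant, so `W i ≠ W (i + 1)`. This excludes `d = 3`, where both would equal `Im A (i + 1)`.
If `d = 2`, the lines `L i = W i ∩ W (i + 1)` form such a family, so `L i ≠ L (i + 1)` and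
`W (i + 1) = L i + L (i + 1)`. Then the `n` lines `L i` span `∑ Im A i`, which is invariant and
hence all of `ℂ^r`, contradicting `r ≥ n + 1`.
-/

section BraidWords

variable {M : Type*} [Monoid M] {C : ℕ → M} {n : ℕ}

def braidProd (C : ℕ → M) (k : ℕ) : M := ((List.range k).map fun i => C (i + 1)).prod

@[simp]
lemma braidProd_zero : braidProd C 0 = 1 := rfl

lemma braidProd_succ (k : ℕ) : braidProd C (k + 1) = braidProd C k * C (k + 1) := by
  simp [braidProd, List.range_succ]

lemma isUnit_braidProd {k : ℕ} (hC : ∀ i, 1 ≤ i → i ≤ k → IsUnit (C i)) :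
    IsUnit (braidProd C k) := by
  induction k with
  | zero => exact isUnit_one
  | succ k ih =>
    rw [braidProd_succ]
    exact (ih fun i h1 h2 => hC i h1 (by omega)).mul (hC _ (by omega) le_rfl)

variable
  (hcomm : ∀ i j, 1 ≤ i → i ≤ n - 1 → 1 ≤ j → j ≤ n - 1 → i + 2 ≤ j → C i * C j = C j * C i)
  (hbraid : ∀ i, 1 ≤ i → i ≤ n - 2 → C i * C (i + 1) * C i = C (i + 1) * C i * C (i + 1))

include hcomm in
lemma commute_braidProd {j k : ℕ} (hj : j ≤ n - 1) (hkj : k + 2 ≤ j) :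
    Commute (C j) (braidProd C k) :=
  Commute.list_prod_right _ _ fun x hx => by
    obtain ⟨i, hi, rfl⟩ := List.mem_map.mp hx
    have := List.mem_range.mp hi
    exact (hcomm (i + 1) j (by omega) (by omega) (by omega) hj (by omega)).symm

include hcomm hbraid in
lemma semiconjBy_braidProd {i k : ℕ} (hi : 1 ≤ i) (hik : i < k) (hk : k ≤ n - 1) :
    SemiconjBy (braidProd C k) (C i) (C (i + 1)) := by
  induction k, hik using Nat.le_induction with
  | base =>
    obtain ⟨m, rfl⟩ : ∃ m, i = m + 1 := ⟨i - 1, by omega⟩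
    have hc := (commute_braidProd hcomm (j := m + 2) (k := m) (by omega) le_rfl).eq
    calc braidProd C (m + 2) * C (m + 1)
        = braidProd C m * (C (m + 1) * C (m + 2) * C (m + 1)) := by
          simp only [braidProd_succ, mul_assoc]
      _ = braidProd C m * C (m + 2) * (C (m + 1) * C (m + 2)) := by
          rw [hbraid (m + 1) hi (by omega)]; simp only [mul_assoc]
      _ = C (m + 2) * braidProd C (m + 2) := by
          rw [← hc]; simp only [braidProd_succ, mul_assoc]
  | succ k hik ih =>
    have hc := hcomm i (k + 1) hi (by omega) (by omega) hk (by omega)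
    calc braidProd C (k + 1) * C i = braidProd C k * C i * C (k + 1) := by
          rw [braidProd_succ, mul_assoc, ← hc, mul_assoc]
      _ = C (i + 1) * braidProd C (k + 1) := by
          rw [ih (by omega), braidProd_succ, mul_assoc]

include hcomm hbraid in
lemma semiconjBy_braidProd_mul_braidProd {k : ℕ} (hk : k + 2 ≤ n) :
    SemiconjBy (braidProd C (k + 1) * braidProd C k) (C (k + 1)) (C 1) := by
  induction k with
  | zero => simp [SemiconjBy, braidProd_succ]
  | succ k ih =>
    have hc := (commute_braidProd hcomm (j := k + 2) (k := k) (by omega) le_rfl).eq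
    have hE : braidProd C (k + 2) * braidProd C (k + 1)
        = braidProd C (k + 1) * braidProd C k * (C (k + 2) * C (k + 1)) := by
      rw [braidProd_succ (k + 1), braidProd_succ k, mul_assoc, ← mul_assoc (C (k + 2)), hc]
      simp only [mul_assoc]
    have hb := hbraid (k + 1) (by omega) (by omega)
    calc braidProd C (k + 2) * braidProd C (k + 1) * C (k + 2)
        = braidProd C (k + 1) * braidProd C k * (C (k + 1) * C (k + 2) * C (k + 1)) := by
          rw [hE, hb]; simp only [mul_assoc]
      _ = C 1 * (braidProd C (k + 2) * braidProd C (k + 1)) := by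
          rw [hE, ← mul_assoc (C 1), ← (ih (by omega)).eq]
          simp only [mul_assoc]

include hcomm hbraid in
lemma semiconjBy_braidProd_mul_self (hn : 2 ≤ n) :
    SemiconjBy (braidProd C (n - 1) * braidProd C (n - 1)) (C (n - 1)) (C 1) := by
  obtain ⟨k, hk⟩ : ∃ k, n - 1 = k + 1 := ⟨n - 2, by omega⟩
  have hsq : braidProd C (k + 1) * braidProd C (k + 1)
      = braidProd C (k + 1) * braidProd C k * C (k + 1) := by
    rw [mul_assoc, ← braidProd_succ]
  rw [hk, hsq]
  exact (semiconjBy_braidProd_mul_braidProd hcomm hbraid (by omega)).mul_left (Commute.refl _)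

end BraidWords

lemma ZMod.forall_of_add_one {n : ℕ} [NeZero n] {P : ZMod n → Prop} (a : ZMod n) (ha : P a)
    (h : ∀ i, P i → P (i + 1)) (i : ZMod n) : P i := by
  suffices ∀ m : ℕ, P (a + m) by simpa using this (i - a).val
  intro m
  induction m with
  | zero => simpa using ha
  | succ m ih => simpa [← add_assoc] using h _ ih

lemma SemiconjBy.commute_of_commute {M : Type*} [Monoid M] {t x y x' y' : M} (ht : IsUnit t)
    (hx : SemiconjBy t x x') (hy : SemiconjBy t y y') (h : Commute x y) : Commute x' y' :=
  ht.mul_left_inj.mp <| by rw [← (hx.mul_right hy).eq, h.eq, (hy.mul_right hx).eq]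

lemma commute_add_of_semiconjBy {M : Type*} [Monoid M] {n : ℕ} [NeZero n] {t : M}
    {A : ZMod n → M} (ht : IsUnit t) (hA : ∀ i, SemiconjBy t (A i) (A (i + 1))) {i₀ k : ZMod n}
    (h : Commute (A i₀) (A (i₀ + k))) (i : ZMod n) : Commute (A i) (A (i + k)) :=
  ZMod.forall_of_add_one i₀ h (fun i hi => by
    simpa only [add_right_comm i k 1] using (hA i).commute_of_commute ht (hA (i + k)) hi) i

lemma semiconjBy_braidProd_cyclic {ι R : Type*} [Fintype ι] [DecidableEq ι] [CommRing R] {n : ℕ}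
    (hn : 2 ≤ n) {C : ℕ → Matrix ι ι R}
    (hcomm : ∀ i j, 1 ≤ i → i ≤ n - 1 → 1 ≤ j → j ≤ n - 1 → i + 2 ≤ j →
      C i * C j = C j * C i)
    (hbraid : ∀ i, 1 ≤ i → i ≤ n - 2 → C i * C (i + 1) * C i = C (i + 1) * C i * C (i + 1))
    {T : Matrix ι ι R} (hTu : IsUnit T) (hT : T = braidProd C (n - 1))
    {A : ZMod n → Matrix ι ι R} (hA : ∀ i : ℕ, 1 ≤ i → i ≤ n - 1 → A i = C i - 1)
    (hA0 : A 0 = T * C (n - 1) * T⁻¹ - 1) (i : ZMod n) : SemiconjBy T (A i) (A (i + 1)) := by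
  have : NeZero n := ⟨by omega⟩
  have hdet := (Matrix.isUnit_iff_isUnit_det T).mp hTu
  have hlast : SemiconjBy T (C (n - 1)) (A 0 + 1) := by
    rw [hA0, sub_add_cancel, SemiconjBy, Matrix.nonsing_inv_mul_cancel_right T _ hdet]
  have hfirst : SemiconjBy T (A 0 + 1) (C 1) := by
    refine hTu.mul_left_inj.mp ?_
    have htwist := (semiconjBy_braidProd_mul_self hcomm hbraid hn).eq
    rw [← hT] at htwist
    rw [mul_assoc, ← hlast.eq, ← mul_assoc, htwist, mul_assoc]
  obtain ⟨m, hm, rfl⟩ : ∃ m < n, (m : ZMod n) = i := ⟨i.val, i.val_lt, i.natCast_zmod_val⟩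
  rcases m with _ | m
  · have h1 := hA 1 le_rfl (by omega)
    rw [Nat.cast_one] at h1
    simpa [h1] using hfirst.sub_right (SemiconjBy.one_right T)
  rcases Nat.lt_or_ge (m + 2) n with hm2 | hm2
  · have h1 := hA (m + 1) (by omega) (by omega)
    have h2 := hA (m + 2) (by omega) (by omega)
    push_cast at h1 h2 ⊢
    rw [h1, add_assoc, one_add_one_eq_two, h2, hT]
    exact (semiconjBy_braidProd hcomm hbraid (by omega) (by omega) le_rfl).sub_right
      (SemiconjBy.one_right _)
  · obtain rfl : n = m + 2 := by omega
    have h1 := hA (m + 1) (by omega) (by omega)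
    have h0 : ((m + 1 : ℕ) : ZMod (m + 2)) + 1 = 0 := by
      rw [← Nat.cast_succ]; exact ZMod.natCast_self _
    rw [h0, h1]
    simpa using hlast.sub_right (SemiconjBy.one_right T)

section ShiftEquivariant

variable {R M : Type*} [Semiring R] [AddCommMonoid M] [Module R M] {n : ℕ} [NeZero n]
  {e : M ≃ₗ[R] M} {p : ZMod n → Submodule R M}

lemma finrank_eq_of_map_eq (hp : ∀ i, (p i).map (e : M →ₗ[R] M) = p (i + 1)) (i : ZMod n) :
    Module.finrank R (p i) = Module.finrank R (p 0) :=
  ZMod.forall_of_add_one (P := fun i => Module.finrank R (p i) = Module.finrank R (p 0)) 0 rfl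
    (fun i hi => by rw [← hp, LinearEquiv.finrank_map_eq, hi]) i

lemma eq_of_map_eq_of_eq (hp : ∀ i, (p i).map (e : M →ₗ[R] M) = p (i + 1)) {i₀ : ZMod n}
    (h : p i₀ = p (i₀ + 1)) (i : ZMod n) : p i = p 0 :=
  have hstep : ∀ i, p i = p (i + 1) :=
    ZMod.forall_of_add_one i₀ h fun i hi => by rw [← hp, ← hp (i + 1), hi]
  ZMod.forall_of_add_one (P := fun i => p i = p 0) 0 rfl (fun i hi => (hstep i).symm.trans hi) i

end ShiftEquivariant

lemma Module.End.range_mem_invtSubmodule {R M : Type*} [Semiring R] [AddCommMonoid M]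
    [Module R M] {f g : Module.End R M} (h : Commute f g) :
    LinearMap.range g ∈ f.invtSubmodule := by
  rintro _ ⟨x, rfl⟩
  exact ⟨f x, by rw [← Module.End.mul_apply, ← h.eq, Module.End.mul_apply]⟩

lemma SemiconjBy.map_range {R M : Type*} [Semiring R] [AddCommMonoid M]
    [Module R M] {e : M ≃ₗ[R] M} {f g : Module.End R M}
    (h : SemiconjBy (e : Module.End R M) f g) :
    (LinearMap.range f).map (e : M →ₗ[R] M) = LinearMap.range g := by
  rw [← LinearMap.range_comp, ← Module.End.mul_eq_comp, h.eq, Module.End.mul_eq_comp,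
    LinearMap.range_comp_of_range_eq_top _ e.range]

lemma Submodule.sup_eq_of_ne_of_finrank_eq {K V : Type*} [DivisionRing K] [AddCommGroup V]
    [Module K V] [FiniteDimensional K V] {p q s : Submodule K V} (hps : p ≤ s) (hqs : q ≤ s)
    (hpq : p ≠ q) (hfin : Module.finrank K p = Module.finrank K q)
    (hs : Module.finrank K s ≤ Module.finrank K p + 1) : p ⊔ q = s := by
  refine Submodule.eq_of_le_of_finrank_le (sup_le hps hqs) (hs.trans ?_)
  by_contra! hlt
  have hp := Submodule.eq_of_le_of_finrank_le (le_sup_left : p ≤ p ⊔ q) (by omega)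
  have hq := Submodule.eq_of_le_of_finrank_le (le_sup_right : q ≤ p ⊔ q) (by omega)
  exact hpq (hp.trans hq.symm)

lemma Submodule.finrank_iSup_le_sum {K V ι : Type*} [DivisionRing K] [AddCommGroup V]
    [Module K V] [FiniteDimensional K V] [Fintype ι] (p : ι → Submodule K V) :
    Module.finrank K ↥(⨆ i, p i) ≤ ∑ i, Module.finrank K (p i) := by
  rw [← Finset.sup_univ_eq_iSup]
  exact Finset.apply_sup_le_sum (f := fun q : Submodule K V => Module.finrank K q)
    (finrank_bot K V) (Submodule.finrank_add_le_finrank_add_finrank _ _) _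

section CyclicFamily

open Module LinearMap

variable {K E : Type*} [Field K] [AddCommGroup E] [Module K E] {n : ℕ}

def rangeMeet (a : ZMod n → Module.End K E) (i : ZMod n) : Submodule K E :=
  range (a i) ⊓ range (a (i + 1))

variable {a : ZMod n → Module.End K E} {e : E ≃ₗ[K] E}
  (hshift : ∀ i, SemiconjBy (e : Module.End K E) (a i) (a (i + 1)))
  (hcomm : ∀ i k, 2 ≤ k → k + 2 ≤ n → Commute (a i) (a (i + k)))
  (hirr : ∀ q : Submodule K E, (∀ i, q ∈ (a i).invtSubmodule) → q = ⊥ ∨ q = ⊤)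

include hshift in
lemma map_rangeMeet (i : ZMod n) :
    (rangeMeet a i).map (e : E →ₗ[K] E) = rangeMeet a (i + 1) := by
  rw [rangeMeet, Submodule.map_inf _ e.injective, (hshift i).map_range,
    (hshift (i + 1)).map_range, rangeMeet]

include hcomm in
lemma rangeMeet_mem_invtSubmodule {k : ℕ} (hk : 2 ≤ k) (hkn : k + 3 ≤ n) (j : ZMod n) :
    rangeMeet a (j + k) ∈ (a j).invtSubmodule := by
  refine Module.End.invtSubmodule.inf_mem
    (Module.End.range_mem_invtSubmodule (hcomm j k hk (by omega))) ?_
  simpa [add_assoc] using Module.End.range_mem_invtSubmodule (hcomm j (k + 1) (by omega) hkn)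

include hirr in
lemma iSup_range_eq_top {i₀ : ZMod n} (h : range (a i₀) ≠ ⊥) : ⨆ i, range (a i) = ⊤ :=
  (hirr _ fun j x _ => Submodule.mem_iSup_of_mem j (mem_range_self _ x)).resolve_left
    fun hbot => h (eq_bot_iff.2 (hbot ▸ le_iSup (fun i => range (a i)) i₀))

include hirr in
lemma ne_add_one_of_irreducible [NeZero n] {p : ZMod n → Submodule K E}
    (hp : ∀ i, (p i).map (e : E →ₗ[K] E) = p (i + 1))
    (hinv : ∀ j, p (j + 2) ∈ (a j).invtSubmodule) (hbot : p 0 ≠ ⊥) (htop : p 0 ≠ ⊤)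
    (i : ZMod n) : p i ≠ p (i + 1) := fun h =>
  have hconst := eq_of_map_eq_of_eq hp h
  (hirr (p 0) fun j => hconst (j + 2) ▸ hinv j).elim hbot htop

include hshift hcomm hirr in
lemma rangeMeet_ne_rangeMeet_add_one [NeZero n] (hn : 5 ≤ n) (hne : rangeMeet a 0 ≠ ⊥)
    (htop : range (a 0) ≠ ⊤) (i : ZMod n) : rangeMeet a i ≠ rangeMeet a (i + 1) :=
  ne_add_one_of_irreducible hirr (map_rangeMeet hshift)
    (fun j => by simpa using rangeMeet_mem_invtSubmodule hcomm le_rfl hn j) hne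
    (ne_top_of_le_ne_top htop inf_le_left) i

include hshift hcomm hirr in
lemma inf_rangeMeet_ne_add_one [NeZero n] (hn : 6 ≤ n)
    (hbot : rangeMeet a 0 ⊓ rangeMeet a (0 + 1) ≠ ⊥)
    (htop : rangeMeet a 0 ⊓ rangeMeet a (0 + 1) ≠ ⊤) (i : ZMod n) :
    rangeMeet a i ⊓ rangeMeet a (i + 1) ≠ rangeMeet a (i + 1) ⊓ rangeMeet a (i + 1 + 1) := by
  refine ne_add_one_of_irreducible hirr (p := fun i => rangeMeet a i ⊓ rangeMeet a (i + 1))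
    (e := e) (fun i => ?_) (fun j => ?_) hbot htop i
  · simp only [Submodule.map_inf _ e.injective, map_rangeMeet hshift]
  · have h2 := rangeMeet_mem_invtSubmodule hcomm (k := 2) le_rfl (by omega) j
    have h3 := rangeMeet_mem_invtSubmodule hcomm (k := 3) (by omega) (by omega) j
    push_cast at h2 h3
    rw [add_assoc j 2 1, two_add_one_eq_three]
    exact Module.End.invtSubmodule.inf_mem h2 h3

variable [FiniteDimensional K E]

include hshift hcomm hirr in
lemma not_forall_finrank_rangeMeet_eq_two [NeZero n] (hn : 6 ≤ n)
    (hrank : ∀ i, finrank K (range (a i)) = 3) (hE : n + 1 ≤ finrank K E)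
    (hWne : ∀ i, rangeMeet a i ≠ rangeMeet a (i + 1)) :
    ¬ ∀ i, finrank K (rangeMeet a i) = 2 := by
  intro h2
  set W := rangeMeet a
  set L : ZMod n → Submodule K E := fun i => W i ⊓ W (i + 1)
  have hWsup : ∀ i, W i ⊔ W (i + 1) = range (a (i + 1)) := fun i =>
    Submodule.sup_eq_of_ne_of_finrank_eq inf_le_right inf_le_left (hWne i) (by rw [h2, h2])
      (by rw [hrank, h2])
  have hL : ∀ i, finrank K (L i) = 1 := fun i => by
    have := Submodule.finrank_sup_add_finrank_inf_eq (W i) (W (i + 1))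
    rw [hWsup, hrank, h2, h2] at this
    change finrank K ↥(W i ⊓ W (i + 1)) = 1
    omega
  have hLne : ∀ i, L i ≠ L (i + 1) :=
    inf_rangeMeet_ne_add_one hshift hcomm hirr hn
      (fun h => one_ne_zero ((hL 0).symm.trans (Submodule.finrank_eq_zero.mpr h)))
      (fun h => by have := hL 0; rw [show L 0 = ⊤ from h, finrank_top] at this; omega)
  have hWL : ∀ i, L i ⊔ L (i + 1) = W (i + 1) := fun i =>
    Submodule.sup_eq_of_ne_of_finrank_eq inf_le_right inf_le_left (hLne i) (by rw [hL, hL])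
      (by rw [h2, hL])
  have hVbot : range (a 0) ≠ ⊥ := fun h =>
    three_ne_zero ((hrank 0).symm.trans (Submodule.finrank_eq_zero.mpr h))
  have hWle : ∀ j, W j ≤ ⨆ i, L i := fun j => by
    rw [← sub_add_cancel j 1, ← hWL]
    exact sup_le (le_iSup L _) (le_iSup L _)
  have hLtop : ⊤ ≤ ⨆ i, L i := by
    rw [← iSup_range_eq_top hirr hVbot]
    refine iSup_le fun j => ?_
    rw [← sub_add_cancel j 1, ← hWsup]
    exact sup_le (hWle _) (hWle _)
  have := (Submodule.finrank_mono hLtop).trans (Submodule.finrank_iSup_le_sum L)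
  simp only [finrank_top, hL, Finset.sum_const, Finset.card_univ, ZMod.card, smul_eq_mul,
    mul_one] at this
  omega

include hshift hcomm hirr in
theorem finrank_rangeMeet_eq_one [NeZero n] (hn : 6 ≤ n)
    (hrank : ∀ i, finrank K (range (a i)) = 3) (hE : n + 1 ≤ finrank K E)
    (hne : ∀ i, rangeMeet a i ≠ ⊥) (i : ZMod n) : finrank K (rangeMeet a i) = 1 := by
  have htop : range (a 0) ≠ ⊤ := fun h => by have := hrank 0; rw [h, finrank_top] at this; omega
  have hWne := rangeMeet_ne_rangeMeet_add_one hshift hcomm hirr (by omega) (hne 0) htop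
  have hconst := finrank_eq_of_map_eq (map_rangeMeet hshift)
  have hle : finrank K (rangeMeet a 0) ≤ 3 := hrank 0 ▸ Submodule.finrank_mono inf_le_left
  have hpos : finrank K (rangeMeet a 0) ≠ 0 := mt Submodule.finrank_eq_zero.mp (hne 0)
  have hne3 : finrank K (rangeMeet a 0) ≠ 3 := fun h3 => by
    have h0 : rangeMeet a 0 = range (a (0 + 1)) :=
      Submodule.eq_of_le_of_finrank_eq inf_le_right (by rw [h3, hrank])
    have h1 : rangeMeet a (0 + 1) = range (a (0 + 1)) :=
      Submodule.eq_of_le_of_finrank_eq inf_le_left (by rw [hconst, h3, hrank])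
    exact hWne 0 (h0.trans h1.symm)
  have hne2 : finrank K (rangeMeet a 0) ≠ 2 := fun h2 =>
    not_forall_finrank_rangeMeet_eq_two hshift hcomm hirr hn hrank hE hWne
      fun i => (hconst i).trans h2
  rw [hconst]
  omega

end CyclicFamily

/-- For `n ≥ 6` and an irreducible representation of `B_n` of dimension `r ≥ n+1`,
with `A i = C i - 1` (`i ∈ ℤ_n`, `A 0 = T C_{n-1} T⁻¹ - 1`): if `rank (A i) = 3` for
all `i` and `Im A_i ∩ Im A_{i+1} ≠ {0}` for all `i ∈ ℤ_n`, then
`dim (Im A_i ∩ Im A_{i+1}) = 1` for all `i ∈ ℤ_n`. -/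
theorem stmt_17 (n r : ℕ) (hn : 6 ≤ n) (hr : n + 1 ≤ r)
    (C : ℕ → Matrix (Fin r) (Fin r) ℂ)
    (hinv : ∀ i, 1 ≤ i → i ≤ n - 1 → IsUnit (C i))
    (hcomm : ∀ i j, 1 ≤ i → i ≤ n - 1 → 1 ≤ j → j ≤ n - 1 → i + 2 ≤ j →
      C i * C j = C j * C i)
    (hbraid : ∀ i, 1 ≤ i → i ≤ n - 2 →
      C i * C (i + 1) * C i = C (i + 1) * C i * C (i + 1))
    (hirr : ∀ p : Submodule ℂ (Fin r → ℂ),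
      (∀ i, 1 ≤ i → i ≤ n - 1 → ∀ v ∈ p, (C i).mulVec v ∈ p) → p = ⊥ ∨ p = ⊤)
    (T : Matrix (Fin r) (Fin r) ℂ)
    (hT : T = (List.map (fun i => C (i + 1)) (List.range (n - 1))).prod)
    (A : ZMod n → Matrix (Fin r) (Fin r) ℂ)
    (hA : ∀ i : ℕ, 1 ≤ i → i ≤ n - 1 → A (i : ZMod n) = C i - 1)
    (hA0 : A 0 = T * C (n - 1) * T⁻¹ - 1)
    (hrank : ∀ i : ZMod n, (A i).rank = 3)
    (hne : ∀ i : ZMod n,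
      LinearMap.range (A i).mulVecLin ⊓ LinearMap.range (A (i + 1)).mulVecLin ≠ ⊥) :
    ∀ i : ZMod n,
      Module.finrank ℂ
        ↥(LinearMap.range (A i).mulVecLin ⊓
          LinearMap.range (A (i + 1)).mulVecLin) = 1 := by
  have : NeZero n := ⟨by omega⟩
  have hTu : IsUnit T := hT ▸ isUnit_braidProd hinv
  have hshift := semiconjBy_braidProd_cyclic (by omega) hcomm hbraid hTu hT hA hA0
  have hcommA : ∀ i k, 2 ≤ k → k + 2 ≤ n → Commute (A i) (A (i + k)) := by
    intro i k hk hkn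
    refine commute_add_of_semiconjBy hTu hshift (i₀ := 1) ?_ i
    have h1 := hA 1 le_rfl (by omega)
    have hk1 := hA (1 + k) (by omega) (by omega)
    push_cast at h1 hk1
    rw [h1, hk1]
    have hC : Commute (C 1) (C (1 + k)) :=
      hcomm 1 (1 + k) le_rfl (by omega) (by omega) (by omega) (by omega)
    exact (hC.sub_right (Commute.one_right _)).sub_left (Commute.one_left _)
  have hirrA : ∀ p : Submodule ℂ (Fin r → ℂ),
      (∀ i, p ∈ Module.End.invtSubmodule (A i).mulVecLin) → p = ⊥ ∨ p = ⊤ := by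
    refine fun p hp => hirr p fun i hi1 hi2 v hv => ?_
    rw [← sub_add_cancel (C i) 1, ← hA i hi1 hi2, Matrix.add_mulVec, Matrix.one_mulVec]
    exact p.add_mem (hp i hv) hv
  refine finrank_rangeMeet_eq_one (e := T.toLinearEquiv' hTu.invertible)
    (fun i => (hshift i).map Matrix.toLinAlgEquiv') (fun i k hk hkn => (hcommA i k hk hkn).map
      Matrix.toLinAlgEquiv') hirrA hn hrank ?_ hne
  simpa using hr
end
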